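/- Let (Ω, Σ, μ) be a measure space with μ(Ω) < ∞, and let Φ ⪯ Ψ be Young's functions (i.e., Φ(x) ≤ Ψ(ax) for all x ≥ x₀ ≥ 0 for some a > 0). If the weighted conditional operator R_u(f) = E(uf) is bounded from L^Φ(Σ) to L^Ψ(Σ), then E(u) ∈ L^∞(𝒜). -/

import Mathlib

open MeasureTheory

/-- A Young's function: continuous, convex, even, vanishing only at `0`,
with `Φ x / x → ∞` as `x → ∞`. -/
def IsYoung (Φ : ℝ → ℝ) : Prop :=
  Continuous Φ ∧ ConvexOn ℝ Set.univ Φ ∧ (∀ x, Φ x = 0 ↔ x = 0) ∧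
    (∀ x, Φ (-x) = Φ x) ∧ Filter.Tendsto (fun x => Φ x / x) Filter.atTop Filter.atTop

/-- The complementary Young's function `Φ*(y) = sup { x·|y| − Φ(x) : x ≥ 0 }`. -/
noncomputable def complYoung (Φ : ℝ → ℝ) (y : ℝ) : ℝ :=
  sSup ((fun x => x * |y| - Φ x) '' Set.Ici (0 : ℝ))

/-- Membership in the Orlicz space `L^Φ`: `∫ Φ(k |f|) dμ < ∞` for some `k > 0`. -/
def MemOrlicz {Ω : Type*} {mΩ : MeasurableSpace Ω} (Φ : ℝ → ℝ) (μ : Measure Ω)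
    (f : Ω → ℝ) : Prop :=
  ∃ k : ℝ, 0 < k ∧ Integrable (fun x => Φ (k * |f x|)) μ

/-- The Luxemburg norm `N_Φ(f) = inf { k > 0 : ∫ Φ(|f|/k) dμ ≤ 1 }`. -/
noncomputable def luxNorm {Ω : Type*} {mΩ : MeasurableSpace Ω} (Φ : ℝ → ℝ)
    (μ : Measure Ω) (f : Ω → ℝ) : ℝ :=
  sInf {k : ℝ | 0 < k ∧ ∫ x, Φ (|f x| / k) ∂μ ≤ 1}


/-!
Suppose `E(u)` is not essentially bounded, and let `M` bound the norm of `R_u`. Pick an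
`𝒜`-measurable set `A` on which `n < |E(u)| ≤ N`, with `n > M a` and `μ(A)` so small that the
`x` with `Φ(x) = 1 / μ(A)` exceeds `x₀`. Then `N_Φ(1_A) ≤ 1 / x`, and `R_u(1_A) = 1_A E(u)`.
Every admissible `k` for `N_Ψ(1_A E(u))` satisfies `Ψ(n / k) μ(A) ≤ 1`, i.e.
`Ψ(n / k) ≤ Φ(x) ≤ Ψ(a x)`, so `N_Ψ(1_A E(u)) ≥ n / (a x)`. Boundedness of `R_u` then gives
`n / (a x) ≤ M / x`, contradicting `n > M a`.
-/

open Filter Topology Set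

namespace IsYoung

variable {Φ : ℝ → ℝ}

lemma zero (h : IsYoung Φ) : Φ 0 = 0 := (h.2.2.1 0).2 rfl

lemma nonneg (h : IsYoung Φ) (x : ℝ) : 0 ≤ Φ x := by
  have hmid := h.2.1.2 (mem_univ x) (mem_univ (-x)) (by norm_num : (0 : ℝ) ≤ 1 / 2)
    (by norm_num : (0 : ℝ) ≤ 1 / 2) (by norm_num)
  simp only [smul_eq_mul, h.2.2.2.1] at hmid
  rw [← mul_add, add_neg_cancel, mul_zero, h.zero] at hmid
  linarith

lemma pos (h : IsYoung Φ) {x : ℝ} (hx : x ≠ 0) : 0 < Φ x :=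
  (h.nonneg x).lt_of_ne' fun h0 => hx ((h.2.2.1 x).1 h0)

lemma strictMonoOn (h : IsYoung Φ) : StrictMonoOn Φ (Ici 0) := by
  intro x hx y hy hxy
  rcases (mem_Ici.1 hx).eq_or_lt with rfl | hx0
  · rw [h.zero]
    exact h.pos hxy.ne'
  · refine h.2.1.lt_right_of_left_lt (mem_univ 0) (mem_univ y) ?_
      (h.zero.trans_lt (h.pos hx0.ne'))
    rw [openSegment_eq_Ioo (hx0.trans hxy)]
    exact ⟨hx0, hxy⟩

lemma tendsto_atTop (h : IsYoung Φ) : Tendsto Φ atTop atTop := by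
  refine (h.2.2.2.2.atTop_mul_atTop₀ tendsto_id).congr' ?_
  filter_upwards [eventually_gt_atTop 0] with x hx
  exact div_mul_cancel₀ (Φ x) hx.ne'

lemma exists_gt_eq {x₀ y : ℝ} (h : IsYoung Φ) (hy : Φ x₀ < y) : ∃ x, x₀ < x ∧ Φ x = y := by
  obtain ⟨b, hyb, hx₀b⟩ := ((h.tendsto_atTop.eventually_ge_atTop y).and
    (eventually_ge_atTop x₀)).exists
  obtain ⟨x, hx, rfl⟩ := intermediate_value_Icc hx₀b h.1.continuousOn ⟨hy.le, hyb⟩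
  exact ⟨x, hx.1.lt_of_ne (by rintro rfl; exact hy.false), rfl⟩

end IsYoung

section Orlicz

variable {Ω : Type*} {mΩ : MeasurableSpace Ω} {μ : Measure Ω} {Φ : ℝ → ℝ}

lemma luxNorm_congr_ae {f g : Ω → ℝ} (hfg : f =ᵐ[μ] g) : luxNorm Φ μ f = luxNorm Φ μ g := by
  have hint : ∀ k : ℝ, ∫ x, Φ (|f x| / k) ∂μ = ∫ x, Φ (|g x| / k) ∂μ := fun k =>
    integral_congr_ae (hfg.mono fun x hx => by simp only [hx])
  simp only [luxNorm, hint]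

lemma luxNorm_le {f : Ω → ℝ} {k : ℝ} (hk : 0 < k) (hf : ∫ x, Φ (|f x| / k) ∂μ ≤ 1) :
    luxNorm Φ μ f ≤ k :=
  csInf_le ⟨0, fun _ hk' => hk'.1.le⟩ ⟨hk, hf⟩

lemma luxNorm_indicator_one_le (hΦ : Φ 0 = 0) {A : Set Ω} (hA : MeasurableSet A) {x : ℝ}
    (hx : 0 < x) (hxA : Φ x * μ.real A ≤ 1) : luxNorm Φ μ (A.indicator 1) ≤ x⁻¹ := by
  refine luxNorm_le (inv_pos.2 hx) ?_
  have hind : (fun z => Φ (|A.indicator 1 z| / x⁻¹)) = A.indicator fun _ => Φ x := by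
    ext z
    by_cases hz : z ∈ A <;> simp [hz, hΦ]
  rwa [hind, integral_indicator_const _ hA, smul_eq_mul, mul_comm]

lemma condExp_mul_indicator_one {m : MeasurableSpace Ω} {u : Ω → ℝ} (hu : Integrable u μ)
    {A : Set Ω} (hA : MeasurableSet[m] A) :
    μ[fun x => u x * A.indicator 1 x | m] =ᵐ[μ] A.indicator (μ[u | m]) := by
  simp_rw [← Set.indicator_mul_right, Pi.one_apply, mul_one]
  exact condExp_indicator hu hA

variable [IsFiniteMeasure μ]

lemma Continuous.integrable_comp_of_abs_le (hΦ : Continuous Φ) {f : Ω → ℝ}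
    (hf : AEStronglyMeasurable f μ) {N : ℝ} (hfN : ∀ x, |f x| ≤ N) :
    Integrable (fun x => Φ (f x)) μ := by
  obtain ⟨C, hC⟩ :=
    isCompact_Icc.exists_bound_of_continuousOn (hΦ.continuousOn (s := Icc (-N) N))
  exact .of_bound (hΦ.comp_aestronglyMeasurable hf) C
    (.of_forall fun x => hC _ (abs_le.1 (hfN x)))

lemma memOrlicz_of_abs_le (hΦ : Continuous Φ) {f : Ω → ℝ}
    (hf : AEStronglyMeasurable f μ) {N : ℝ} (hfN : ∀ x, |f x| ≤ N) : MemOrlicz Φ μ f :=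
  ⟨1, one_pos, by
    simpa using hΦ.integrable_comp_of_abs_le (continuous_abs.comp_aestronglyMeasurable hf)
      (fun x => (abs_abs (f x)).trans_le (hfN x))⟩

lemma memOrlicz_indicator_one (hΦ : Continuous Φ) {A : Set Ω} (hA : MeasurableSet A) :
    MemOrlicz Φ μ (A.indicator 1) :=
  memOrlicz_of_abs_le hΦ (measurable_const.indicator hA).aestronglyMeasurable (N := 1)
    fun z => by by_cases hz : z ∈ A <;> simp [hz]

lemma Continuous.integrable_comp_abs_div_of_abs_le (hΦ : Continuous Φ)
    {f : Ω → ℝ} (hf : AEStronglyMeasurable f μ) {N : ℝ} (hfN : ∀ x, |f x| ≤ N) (k : ℝ) :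
    Integrable (fun x => Φ (|f x| / k)) μ :=
  hΦ.integrable_comp_of_abs_le ((continuous_abs.div_const k).comp_aestronglyMeasurable hf)
    (N := N / |k|) fun x => by
      rw [abs_div, abs_abs]
      exact div_le_div_of_nonneg_right (hfN x) (abs_nonneg k)

lemma exists_integral_comp_abs_div_le_one (hΦ : IsYoung Φ) {f : Ω → ℝ}
    (hf : AEStronglyMeasurable f μ) {N : ℝ} (hfN : ∀ x, |f x| ≤ N) :
    ∃ k, 0 < k ∧ ∫ x, Φ (|f x| / k) ∂μ ≤ 1 := by
  have hlim : Tendsto (fun k => μ.real univ * Φ (N / k)) atTop (𝓝 0) := by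
    simpa [hΦ.zero] using ((hΦ.1.tendsto 0).comp
      (tendsto_const_nhds.div_atTop tendsto_id)).const_mul (μ.real univ)
  obtain ⟨k, hk1, hk⟩ :=
    ((hlim.eventually (gt_mem_nhds one_pos)).and (eventually_gt_atTop 0)).exists
  refine ⟨k, hk, le_trans ?_ hk1.le⟩
  calc ∫ x, Φ (|f x| / k) ∂μ ≤ ∫ _, Φ (N / k) ∂μ := by
        refine integral_mono (hΦ.1.integrable_comp_abs_div_of_abs_le hf hfN k)
          (integrable_const _) fun x => ?_
        exact hΦ.strictMonoOn.monotoneOn (div_nonneg (abs_nonneg _) hk.le)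
          (div_nonneg ((abs_nonneg _).trans (hfN x)) hk.le)
          (div_le_div_of_nonneg_right (hfN x) hk.le)
    _ = μ.real univ * Φ (N / k) := by simp

lemma div_le_luxNorm (hΦ : IsYoung Φ) {f : Ω → ℝ} (hf : AEStronglyMeasurable f μ) {N : ℝ}
    (hfN : ∀ x, |f x| ≤ N) {A : Set Ω} (hA : MeasurableSet A) (hA0 : 0 < μ.real A) {c y : ℝ}
    (hc : 0 ≤ c) (hcf : ∀ x ∈ A, c ≤ |f x|) (hy : 0 < y) (hΦy : (μ.real A)⁻¹ ≤ Φ y) :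
    c / y ≤ luxNorm Φ μ f := by
  refine le_csInf (exists_integral_comp_abs_div_le_one hΦ hf hfN) ?_
  rintro k ⟨hk, hkf⟩
  have hint := hΦ.1.integrable_comp_abs_div_of_abs_le hf hfN k
  have hmass : Φ (c / k) * μ.real A ≤ 1 := calc
    Φ (c / k) * μ.real A = ∫ _ in A, Φ (c / k) ∂μ := by simp [mul_comm]
    _ ≤ ∫ x in A, Φ (|f x| / k) ∂μ :=
      setIntegral_mono_on (integrableOn_const (measure_ne_top μ A)) hint.integrableOn hA
        fun x hx => hΦ.strictMonoOn.monotoneOn (div_nonneg hc hk.le)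
          (div_nonneg (abs_nonneg _) hk.le) (div_le_div_of_nonneg_right (hcf x hx) hk.le)
    _ ≤ ∫ x, Φ (|f x| / k) ∂μ :=
      setIntegral_le_integral hint (.of_forall fun _ => hΦ.nonneg _)
    _ ≤ 1 := hkf
  have hck : c / k ≤ y := by
    refine (hΦ.strictMonoOn.le_iff_le (div_nonneg hc hk.le) hy.le).1 (le_trans ?_ hΦy)
    rwa [← one_div, le_div_iff₀ hA0]
  rwa [div_le_iff₀ hk, ← div_le_iff₀' hy] at hck

lemma div_le_luxNorm_indicator (hΦ : IsYoung Φ) {g : Ω → ℝ} (hg : AEStronglyMeasurable g μ)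
    {A : Set Ω} (hA : MeasurableSet A) (hA0 : 0 < μ.real A) {c N y : ℝ} (hc : 0 ≤ c)
    (hgA : ∀ x ∈ A, c ≤ |g x| ∧ |g x| ≤ N) (hy : 0 < y) (hΦy : (μ.real A)⁻¹ ≤ Φ y) :
    c / y ≤ luxNorm Φ μ (A.indicator g) := by
  refine div_le_luxNorm hΦ (hg.indicator hA) (N := |N|) (fun x => ?_) hA hA0 hc
    (fun x hx => by simpa [hx] using (hgA x hx).1) hy hΦy
  by_cases hx : x ∈ A
  · simpa [hx] using (hgA x hx).2.trans (le_abs_self N)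
  · simp [hx]

lemma tendsto_measure_lt_abs_atTop {g : Ω → ℝ} (hg : Measurable g) :
    Tendsto (fun c : ℝ => μ {x | c < |g x|}) atTop (𝓝 0) := by
  have h := tendsto_measure_iInter_atTop (μ := μ) (s := fun c : ℝ => {x | c < |g x|})
    (fun c => (measurableSet_lt measurable_const hg.abs).nullMeasurableSet)
    (fun c d hcd x hx => hcd.trans_lt hx) ⟨0, measure_ne_top μ _⟩
  rwa [iInter_eq_empty_iff.2 fun x => ⟨|g x|, lt_irrefl |g x|⟩, measure_empty] at h

lemma exists_measure_abs_mem_Ioc_pos_lt {g : Ω → ℝ} (hg : Measurable g)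
    (hunb : ¬ ∃ M, ∀ᵐ x ∂μ, |g x| ≤ M) (c : ℝ) {ε : ℝ} (hε : 0 < ε) :
    ∃ n N : ℝ, c ≤ n ∧ 0 < μ.real ((fun x => |g x|) ⁻¹' Ioc n N) ∧
      μ.real ((fun x => |g x|) ⁻¹' Ioc n N) < ε := by
  obtain ⟨n, hn, hcn⟩ := (((tendsto_measure_lt_abs_atTop (μ := μ) hg).eventually
    (gt_mem_nhds (ENNReal.ofReal_pos.2 hε))).and (eventually_ge_atTop c)).exists
  have htail : μ {x | n < |g x|} ≠ 0 := fun h0 => hunb ⟨n, by simpa [ae_iff] using h0⟩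
  obtain ⟨N, hN⟩ : ∃ N : ℕ, μ ((fun x => |g x|) ⁻¹' Ioc n N) ≠ 0 := by
    by_contra! hnull
    refine htail (measure_mono_null (fun x hx => ?_) (measure_iUnion_null hnull))
    obtain ⟨N, hN⟩ := exists_nat_ge |g x|
    exact mem_iUnion.2 ⟨N, hx, hN⟩
  exact ⟨n, N, hcn, ENNReal.toReal_pos hN (measure_ne_top μ _),
    ENNReal.toReal_lt_of_lt_ofReal ((measure_mono fun x hx => hx.1).trans_lt hn)⟩

end Orlicz

theorem wct_bounded_implies_condexp_bounded_general {Ω : Type*} {mΩ : MeasurableSpace Ω}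
    {μ : Measure Ω} [IsFiniteMeasure μ]
    (m : MeasurableSpace Ω) (hm : m ≤ mΩ)
    (Φ Ψ : ℝ → ℝ) (hΦ : IsYoung Φ) (hΨ : IsYoung Ψ)
    (hdom : ∃ a : ℝ, 0 < a ∧ ∃ x₀ : ℝ, 0 ≤ x₀ ∧ ∀ x : ℝ, x₀ ≤ x → Φ x ≤ Ψ (a * x))
    (u : Ω → ℝ)
    (hwd : ∀ f : Ω → ℝ, MemOrlicz Φ μ f → Integrable (fun x => u x * f x) μ)
    (hbdd : ∃ M : ℝ, 0 ≤ M ∧ ∀ f : Ω → ℝ, MemOrlicz Φ μ f →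
      MemOrlicz Ψ μ (μ[fun x => u x * f x | m]) ∧
      luxNorm Ψ μ (μ[fun x => u x * f x | m]) ≤ M * luxNorm Φ μ f) :
    ∃ M : ℝ, ∀ᵐ x ∂μ, |(μ[u | m]) x| ≤ M := by
  obtain ⟨a, ha, x₀, hx₀, hΦΨ⟩ := hdom
  obtain ⟨M, hM, hR⟩ := hbdd
  have hu : Integrable u μ := by
    simpa using hwd 1 (memOrlicz_of_abs_le hΦ.1 aestronglyMeasurable_const (N := 1) (by simp))
  set g := μ[u | m]
  have hg : Measurable[m] g := stronglyMeasurable_condExp.measurable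
  by_contra hunb
  have hΦx₀ : 0 < Φ x₀ + 1 := by linarith [hΦ.nonneg x₀]
  obtain ⟨n, N, hn, hA0, hAε⟩ :=
    exists_measure_abs_mem_Ioc_pos_lt (hg.mono hm le_rfl) hunb (M * a + 1) (inv_pos.2 hΦx₀)
  set A := (fun x => |g x|) ⁻¹' Ioc n N
  have hA : MeasurableSet[m] A := hg.abs measurableSet_Ioc
  obtain ⟨x, hx₀x, hΦx⟩ := hΦ.exists_gt_eq (y := (μ.real A)⁻¹)
    ((lt_add_one _).trans ((lt_inv_comm₀ hA0 hΦx₀).1 hAε))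
  have hx : 0 < x := hx₀.trans_lt hx₀x
  have hupper : luxNorm Φ μ (A.indicator 1) ≤ x⁻¹ :=
    luxNorm_indicator_one_le hΦ.zero (hm _ hA) hx (by rw [hΦx, inv_mul_cancel₀ hA0.ne'])
  have hlower : n / (a * x) ≤ luxNorm Ψ μ (A.indicator g) :=
    div_le_luxNorm_indicator hΨ (hg.mono hm le_rfl).aestronglyMeasurable (hm _ hA) hA0
      (by linarith [mul_nonneg hM ha.le]) (fun z hz => ⟨hz.1.le, hz.2⟩) (mul_pos ha hx)
      (hΦx ▸ hΦΨ x hx₀x.le)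
  have : n / (a * x) ≤ M * x⁻¹ := calc
    n / (a * x) ≤ luxNorm Ψ μ (A.indicator g) := hlower
    _ = luxNorm Ψ μ (μ[fun z => u z * A.indicator 1 z | m]) :=
      (luxNorm_congr_ae (condExp_mul_indicator_one hu hA)).symm
    _ ≤ M * luxNorm Φ μ (A.indicator 1) := (hR _ (memOrlicz_indicator_one hΦ.1 (hm _ hA))).2
    _ ≤ M * x⁻¹ := by gcongr
  have hMa : n ≤ M * a := by
    rwa [div_le_iff₀ (by positivity), mul_comm a, ← mul_assoc, inv_mul_cancel_right₀ hx.ne']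
      at this
  linarith

/-- Theorem 2.2(a)(i): if `μ(Ω) < ∞`, `Φ ⪯ Ψ`, and the weighted conditional type
operator `R_u f = E(uf)` is bounded from `L^Φ(Σ)` into `L^Ψ(Σ)`, then
`E(u) ∈ L^∞(𝒜)`. -/
theorem wct_bounded_implies_condexp_bounded {Ω : Type*} {mΩ : MeasurableSpace Ω}
    {μ : Measure Ω} [IsFiniteMeasure μ]
    (m : MeasurableSpace Ω) (hm : m ≤ mΩ) [SigmaFinite (μ.trim hm)]
    (Φ Ψ : ℝ → ℝ) (hΦ : IsYoung Φ) (hΨ : IsYoung Ψ)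
    (hdom : ∃ a : ℝ, 0 < a ∧ ∃ x₀ : ℝ, 0 ≤ x₀ ∧ ∀ x : ℝ, x₀ ≤ x → Φ x ≤ Ψ (a * x))
    (u : Ω → ℝ)
    (hwd : ∀ f : Ω → ℝ, MemOrlicz Φ μ f → Integrable (fun x => u x * f x) μ)
    (hbdd : ∃ M : ℝ, 0 ≤ M ∧ ∀ f : Ω → ℝ, MemOrlicz Φ μ f →
      MemOrlicz Ψ μ (μ[fun x => u x * f x | m]) ∧
      luxNorm Ψ μ (μ[fun x => u x * f x | m]) ≤ M * luxNorm Φ μ f) :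
    ∃ M : ℝ, ∀ᵐ x ∂μ, |(μ[u | m]) x| ≤ M :=
  wct_bounded_implies_condexp_bounded_general m hm Φ Ψ hΦ hΨ hdom u hwd hbdd
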